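/- arXiv:2102.12161 — 4 statements merged into one kernel-verified Lean document; each statement's English description precedes it below -/
import Mathlib

section
/- Let 1 → G → Ĝ → Q → 1 be a short exact sequence of groups (with q : Ĝ → Q the quotient map) which virtually splits: there exist a finite-index subgroup Q₀ ≤ Q and a homomorphism s₀ : Q₀ → Ĝ with q ∘ s₀ = id on Q₀. Then every Ĝ-invariant homogeneous quasimorphism φ on G extends to a homogeneous quasimorphism φ̂ on Ĝ with φ̂|_G = φ and D(φ̂) ≤ 2·D(φ). -/
/-!
Over `Q₀` the extension splits, so `q⁻¹(Q₀) ≅ ker q ⋊ Q₀` and `g ↦ φ (g * s₀ (q g)⁻¹)` is a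
quasimorphism of defect `D` on `q⁻¹(Q₀)`, by `Ĝ`-invariance of `φ`. Averaging it over the finitely
many cosets of `q⁻¹(Q₀)` gives a quasimorphism `f` of defect `D` on `Ĝ` which, again by
invariance, is still `φ` on `ker q`. The homogenization `g ↦ lim f (gⁿ) / n` is homogeneous, has
defect at most `2 D`, and agrees with `f` on `ker q` because `φ` is already homogeneous there.
-/

open Filter Topology

lemma nonpos_of_forall_nat_mul_le {x C : ℝ} (h : ∀ n : ℕ, n * x ≤ C) : x ≤ 0 := by
  by_contra! hx
  obtain ⟨n, hn⟩ := exists_nat_gt (C / x)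
  have := h n
  rw [div_lt_iff₀ hx] at hn
  linarith

section QuasiadditiveSequence

variable {a : ℕ → ℝ} {D : ℝ} (ha : ∀ m n, |a (m + n) - a m - a n| ≤ D)
include ha

lemma nat_mul_sub_sub_le_apply_mul (k n : ℕ) : k * (a n - D) - D ≤ a (k * n) := by
  induction k with
  | zero => simpa using neg_le_of_abs_le (by simpa using ha 0 0)
  | succ k ih =>
    have := (abs_le.mp (ha (k * n) n)).1
    rw [Nat.succ_mul]
    push_cast
    linarith

lemma exists_forall_abs_sub_nat_mul_le : ∃ L : ℝ, ∀ n : ℕ, |a n - n * L| ≤ D := by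
  have hsub : Subadditive fun n => a n + D := fun m n => by
    linarith [(abs_le.mp (ha m n)).2]
  have hbdd : BddBelow (Set.range fun n : ℕ => (a n + D) / n) := by
    refine ⟨min 0 (a 1 - D), Set.forall_mem_range.2 fun n => ?_⟩
    rcases n.eq_zero_or_pos with rfl | hn
    · simp
    · have hnR : (0 : ℝ) < n := by exact_mod_cast hn
      have := nat_mul_sub_sub_le_apply_mul ha n 1
      rw [mul_one] at this
      rw [le_div_iff₀ hnR]
      nlinarith [min_le_right 0 (a 1 - D)]
  refine ⟨hsub.lim, fun n => ?_⟩
  rcases n.eq_zero_or_pos with rfl | hn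
  · simpa using ha 0 0
  have hnR : (0 : ℝ) < n := by exact_mod_cast hn
  have hlower : hsub.lim ≤ (a n + D) / n := hsub.lim_le_div hbdd hn.ne'
  have hupper : (a n - D) / n ≤ hsub.lim := by
    have hmul : Tendsto (fun k : ℕ => k * n) atTop atTop :=
      tendsto_id.atTop_mul_const' hn
    refine ge_of_tendsto ((hsub.tendsto_lim hbdd).comp hmul) ?_
    filter_upwards [eventually_gt_atTop 0] with k hk
    have hkR : (0 : ℝ) < k := by exact_mod_cast hk
    have := nat_mul_sub_sub_le_apply_mul ha k n
    simp only [Function.comp_apply, Nat.cast_mul]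
    rw [div_le_div_iff₀ hnR (by positivity)]
    nlinarith
  rw [le_div_iff₀ hnR] at hlower
  rw [div_le_iff₀ hnR] at hupper
  rw [abs_le]
  constructor <;> linarith

end QuasiadditiveSequence

noncomputable def homogenization {H : Type*} [Group H] (f : H → ℝ) (g : H) : ℝ :=
  limUnder atTop fun n : ℕ => f (g ^ n) / n

section Homogenization

variable {H : Type*} [Group H] {f : H → ℝ}

lemma homogenization_eq_of_forall_abs_sub_le {g : H} {L C : ℝ}
    (h : ∀ n : ℕ, |f (g ^ n) - n * L| ≤ C) : homogenization f g = L := by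
  refine Tendsto.limUnder_eq (tendsto_iff_norm_sub_tendsto_zero.2 ?_)
  refine squeeze_zero' (Eventually.of_forall fun _ => norm_nonneg _) ?_
    (tendsto_const_div_atTop_nhds_zero_nat C)
  filter_upwards [eventually_gt_atTop 0] with n hn
  have hnR : (0 : ℝ) < n := by exact_mod_cast hn
  rw [Real.norm_eq_abs, show f (g ^ n) / n - L = (f (g ^ n) - n * L) / n by field_simp,
    abs_div, abs_of_pos hnR]
  exact div_le_div_of_nonneg_right (h n) hnR.le

lemma homogenization_eq_of_apply_pow {g : H} (h : ∀ n : ℕ, f (g ^ n) = n * f g) :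
    homogenization f g = f g :=
  homogenization_eq_of_forall_abs_sub_le (C := 0) fun n => by simp [h n]

variable {D : ℝ} (hf : ∀ x y : H, |f (x * y) - f x - f y| ≤ D)
include hf

lemma abs_apply_one_le : |f 1| ≤ D := by
  simpa using hf 1 1

lemma abs_apply_pow_sub_homogenization_le (g : H) (n : ℕ) :
    |f (g ^ n) - n * homogenization f g| ≤ D := by
  obtain ⟨L, hL⟩ := exists_forall_abs_sub_nat_mul_le (a := fun n => f (g ^ n)) fun m n => by
    simpa only [pow_add] using hf (g ^ m) (g ^ n)
  rw [homogenization_eq_of_forall_abs_sub_le hL]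
  exact hL n

lemma abs_apply_sub_homogenization_le (g : H) : |f g - homogenization f g| ≤ D := by
  simpa using abs_apply_pow_sub_homogenization_le hf g 1

lemma homogenization_pow (g : H) (k : ℕ) :
    homogenization f (g ^ k) = k * homogenization f g :=
  homogenization_eq_of_forall_abs_sub_le fun n => by
    simpa [← pow_mul, mul_comm, mul_assoc] using abs_apply_pow_sub_homogenization_le hf g (k * n)

lemma homogenization_inv (g : H) : homogenization f g⁻¹ = -homogenization f g := by
  refine homogenization_eq_of_forall_abs_sub_le (C := 3 * D) fun n => ?_
  have h1 := hf (g ^ n) (g ^ n)⁻¹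
  rw [mul_inv_cancel] at h1
  rw [inv_pow]
  have h2 := abs_apply_one_le hf
  have h3 := abs_apply_pow_sub_homogenization_le hf g n
  rw [abs_le] at *
  constructor <;> linarith

lemma homogenization_zpow (g : H) (m : ℤ) :
    homogenization f (g ^ m) = m * homogenization f g := by
  cases m with
  | ofNat k => simpa using homogenization_pow hf g k
  | negSucc k =>
    rw [zpow_negSucc, homogenization_inv hf, homogenization_pow hf, Int.cast_negSucc]
    push_cast
    ring

lemma homogenization_conj (a b : H) :
    homogenization f (a * b * a⁻¹) = homogenization f b := by
  refine homogenization_eq_of_forall_abs_sub_le (C := 3 * D + |f a| + |f a⁻¹|) fun n => ?_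
  have h1 := hf a (b ^ n * a⁻¹)
  have h2 := hf (b ^ n) a⁻¹
  have h3 := abs_apply_pow_sub_homogenization_le hf b n
  rw [conj_pow, mul_assoc]
  rw [abs_le] at *
  constructor <;> linarith [neg_abs_le (f a), neg_abs_le (f a⁻¹), le_abs_self (f a),
    le_abs_self (f a⁻¹)]

-- `(u * v) ^ n * v⁻ⁿ` is the product of the `n` conjugates `vᵏ * u * v⁻ᵏ`, `k < n`.
lemma apply_mul_pow_mul_inv_pow_le (u v : H) (n : ℕ) :
    f ((u * v) ^ n * (v ^ n)⁻¹) ≤ f 1 + n * (homogenization f u + 2 * D) := by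
  induction n with
  | zero => simp
  | succ n ih =>
    have hstep : (u * v) ^ (n + 1) * (v ^ (n + 1))⁻¹
        = (u * v) ^ n * (v ^ n)⁻¹ * (v ^ n * u * (v ^ n)⁻¹) := by
      rw [pow_succ, pow_succ]
      group
    have h1 := (abs_le.mp (hf ((u * v) ^ n * (v ^ n)⁻¹) (v ^ n * u * (v ^ n)⁻¹))).2
    have h2 := (abs_le.mp (abs_apply_sub_homogenization_le hf (v ^ n * u * (v ^ n)⁻¹))).2
    rw [homogenization_conj hf] at h2
    rw [hstep]
    push_cast
    linarith

lemma homogenization_mul_le (u v : H) :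
    homogenization f (u * v) ≤ homogenization f u + homogenization f v + 2 * D := by
  suffices h : homogenization f (u * v) - homogenization f u - homogenization f v - 2 * D ≤ 0 by
    linarith
  refine nonpos_of_forall_nat_mul_le (C := f 1 + 3 * D) fun n => ?_
  have h1 := (abs_le.mp (abs_apply_pow_sub_homogenization_le hf (u * v) n)).1
  have h2 := (abs_le.mp (hf ((u * v) ^ n * (v ^ n)⁻¹) (v ^ n))).2
  have h3 := (abs_le.mp (abs_apply_pow_sub_homogenization_le hf v n)).2
  have h4 := apply_mul_pow_mul_inv_pow_le hf u v n
  rw [inv_mul_cancel_right] at h2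
  linarith

lemma abs_homogenization_mul_sub_le (u v : H) :
    |homogenization f (u * v) - homogenization f u - homogenization f v| ≤ 2 * D := by
  have h1 := homogenization_mul_le hf u v
  have h2 := homogenization_mul_le hf v⁻¹ u⁻¹
  rw [← mul_inv_rev, homogenization_inv hf, homogenization_inv hf, homogenization_inv hf] at h2
  rw [abs_le]
  constructor <;> linarith

end Homogenization

instance Subgroup.finiteIndex_comap {G G' : Type*} [Group G] [Group G'] (f : G →* G')
    (H : Subgroup G') [H.FiniteIndex] : (H.comap f).FiniteIndex :=
  ⟨by rw [Subgroup.index_comap]; exact (H.subgroupOf f.range).index_ne_zero_of_finite⟩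

section CosetAverage

variable {H : Type*} [Group H] (K : Subgroup H)

-- With the transversal `c ↦ c.out`, this is the `K`-part of `g * c.out = (g • c).out * k`.
noncomputable def cosetCocycle (g : H) (c : H ⧸ K) : K :=
  ⟨(g • c).out⁻¹ * (g * c.out), QuotientGroup.eq.mp <| by
    rw [QuotientGroup.out_eq']
    conv_lhs => rw [← QuotientGroup.out_eq' c]
    rfl⟩

lemma cosetCocycle_mul (g g' : H) (c : H ⧸ K) :
    cosetCocycle K (g * g') c = cosetCocycle K g (g' • c) * cosetCocycle K g' c := by
  apply Subtype.ext
  simp only [cosetCocycle, Subgroup.coe_mul, mul_smul]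
  group

lemma coe_cosetCocycle_of_conj_mem {g : H} {c : H ⧸ K} (h : c.out⁻¹ * g * c.out ∈ K) :
    (cosetCocycle K g c : H) = c.out⁻¹ * g * c.out := by
  have hfix : g • c = c := by
    conv_lhs => rw [← QuotientGroup.out_eq' c]
    conv_rhs => rw [← QuotientGroup.out_eq' c]
    refine QuotientGroup.eq.mpr ?_
    simpa [mul_assoc] using K.inv_mem h
  simp only [cosetCocycle, hfix, mul_assoc]

variable [Fintype (H ⧸ K)]

noncomputable def cosetAverage (ψ : K → ℝ) (g : H) : ℝ :=
  (∑ c : H ⧸ K, ψ (cosetCocycle K g c)) / Fintype.card (H ⧸ K)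

lemma abs_cosetAverage_mul_sub_le {ψ : K → ℝ} {D : ℝ}
    (hψ : ∀ a b : K, |ψ (a * b) - ψ a - ψ b| ≤ D) (g g' : H) :
    |cosetAverage K ψ (g * g') - cosetAverage K ψ g - cosetAverage K ψ g'| ≤ D := by
  have hcard : (0 : ℝ) < Fintype.card (H ⧸ K) := by exact_mod_cast Fintype.card_pos
  have hshift : ∑ c : H ⧸ K, ψ (cosetCocycle K g (g' • c)) = ∑ c : H ⧸ K, ψ (cosetCocycle K g c) :=
    Equiv.sum_comp (MulAction.toPerm g') fun c => ψ (cosetCocycle K g c)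
  have hsum : cosetAverage K ψ (g * g') - cosetAverage K ψ g - cosetAverage K ψ g'
      = (∑ c : H ⧸ K, (ψ (cosetCocycle K g (g' • c) * cosetCocycle K g' c)
          - ψ (cosetCocycle K g (g' • c)) - ψ (cosetCocycle K g' c))) / Fintype.card (H ⧸ K) := by
    simp only [cosetAverage, Finset.sum_sub_distrib, hshift, cosetCocycle_mul]
    ring
  rw [hsum, abs_div, abs_of_pos hcard, div_le_iff₀ hcard]
  calc _ ≤ ∑ c : H ⧸ K, |ψ (cosetCocycle K g (g' • c) * cosetCocycle K g' c)
          - ψ (cosetCocycle K g (g' • c)) - ψ (cosetCocycle K g' c)| :=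
        Finset.abs_sum_le_sum_abs _ _
    _ ≤ ∑ _c : H ⧸ K, D := Finset.sum_le_sum fun c _ => hψ _ _
    _ = D * Fintype.card (H ⧸ K) := by simp [mul_comm]

lemma cosetAverage_eq_of_forall_conj {ψ : K → ℝ} {g : H} {r : ℝ}
    (h : ∀ t : H, ∃ ht : t⁻¹ * g * t ∈ K, ψ ⟨t⁻¹ * g * t, ht⟩ = r) :
    cosetAverage K ψ g = r := by
  have hcard : (Fintype.card (H ⧸ K) : ℝ) ≠ 0 := by exact_mod_cast Fintype.card_ne_zero
  have hterm : ∀ c : H ⧸ K, ψ (cosetCocycle K g c) = r := fun c => by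
    obtain ⟨hc, hr⟩ := h c.out
    rw [← hr]
    exact congrArg ψ (Subtype.ext (coe_cosetCocycle_of_conj_mem K hc))
  simp only [cosetAverage, hterm, Finset.sum_const, Finset.card_univ, nsmul_eq_mul]
  field_simp

end CosetAverage

section VirtualSplitting

variable {Ghat Q : Type*} [Group Ghat] [Group Q] {q : Ghat →* Q} {Q₀ : Subgroup Q}
  {s₀ : Q₀ →* Ghat} (hs₀ : ∀ x : Q₀, q (s₀ x) = x)

-- `g = kerComponent g * s₀ (q g)`: the coordinate of `g` along `ker q` in `q⁻¹(Q₀) ≅ ker q ⋊ Q₀`.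
def kerComponent (g : Q₀.comap q) : q.ker :=
  ⟨g * (s₀ ⟨q g, g.2⟩)⁻¹, by simp [MonoidHom.mem_ker, hs₀]⟩

lemma kerComponent_of_mem_ker (x : q.ker) (hx : (x : Ghat) ∈ Q₀.comap q) :
    kerComponent hs₀ ⟨x, hx⟩ = x := by
  have h1 : (⟨q x, hx⟩ : Q₀) = 1 := Subtype.ext x.2
  simp [kerComponent, h1]

lemma coe_kerComponent_mul (a b : Q₀.comap q) :
    (kerComponent hs₀ (a * b) : Ghat) = kerComponent hs₀ a
      * (s₀ ⟨q a, a.2⟩ * kerComponent hs₀ b * (s₀ ⟨q a, a.2⟩)⁻¹) := by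
  have hs : s₀ ⟨q ((a * b : Q₀.comap q) : Ghat), (a * b).2⟩
      = s₀ ⟨q a, a.2⟩ * s₀ ⟨q b, b.2⟩ := by
    rw [← map_mul]
    exact congrArg s₀ (Subtype.ext (map_mul q (a : Ghat) b))
  simp only [kerComponent]
  rw [hs, Subgroup.coe_mul]
  group

-- The cross term of `kerComponent (a * b)` is a conjugate of `kerComponent b`, invisible to `φ`.
lemma abs_apply_kerComponent_mul_sub_le {φ : q.ker → ℝ} {D : ℝ}
    (hD : ∀ x y : q.ker, |φ (x * y) - φ x - φ y| ≤ D)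
    (hinv : ∀ (g : Ghat) (x : q.ker) (h : g * (x : Ghat) * g⁻¹ ∈ q.ker),
      φ ⟨g * x * g⁻¹, h⟩ = φ x)
    (a b : Q₀.comap q) :
    |φ (kerComponent hs₀ (a * b)) - φ (kerComponent hs₀ a) - φ (kerComponent hs₀ b)| ≤ D := by
  set s := s₀ ⟨q a, a.2⟩
  have hy : s * (kerComponent hs₀ b : Ghat) * s⁻¹ ∈ q.ker :=
    q.normal_ker.conj_mem _ (kerComponent hs₀ b).2 s
  have hsplit : kerComponent hs₀ (a * b) = kerComponent hs₀ a * ⟨_, hy⟩ :=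
    Subtype.ext (coe_kerComponent_mul hs₀ a b)
  rw [hsplit, ← hinv s _ hy]
  exact hD _ _

end VirtualSplitting

theorem extension_of_invariant_quasimorphism_virtual_split_general
    {Ghat Q : Type*} [Group Ghat] [Group Q]
    (q : Ghat →* Q)
    (G : Subgroup Ghat) (hker : q.ker = G)
    (Q₀ : Subgroup Q) (hfin : Q₀.FiniteIndex)
    (s₀ : Q₀ →* Ghat) (hs₀ : ∀ x : Q₀, q (s₀ x) = x)
    (φ : G → ℝ) (D : ℝ)
    (hD : ∀ x y : G, |φ (x * y) - φ x - φ y| ≤ D)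
    (hhom : ∀ (x : G) (m : ℤ), φ (x ^ m) = m * φ x)
    (hinv : ∀ (g : Ghat) (x : G) (h : g * (x : Ghat) * g⁻¹ ∈ G), φ ⟨g * x * g⁻¹, h⟩ = φ x) :
    ∃ φhat : Ghat → ℝ,
      (∀ (g : Ghat) (m : ℤ), φhat (g ^ m) = m * φhat g) ∧
      (∀ x : G, φhat x = φ x) ∧
      (∀ x y : Ghat, |φhat (x * y) - φhat x - φhat y| ≤ 2 * D) := by
  subst hker
  let := (Q₀.comap q).fintypeQuotientOfFiniteIndex
  set f := cosetAverage (Q₀.comap q) fun g => φ (kerComponent hs₀ g)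
  have hfD : ∀ x y : Ghat, |f (x * y) - f x - f y| ≤ D :=
    abs_cosetAverage_mul_sub_le _ (abs_apply_kerComponent_mul_sub_le hs₀ hD hinv)
  have hfφ (x : q.ker) : f x = φ x := by
    refine cosetAverage_eq_of_forall_conj _ fun t => ?_
    have hxt : t⁻¹ * (x : Ghat) * t ∈ q.ker := by simpa using q.normal_ker.conj_mem _ x.2 t⁻¹
    refine ⟨Subgroup.ker_le_comap q Q₀ hxt, ?_⟩
    rw [kerComponent_of_mem_ker hs₀ ⟨_, hxt⟩]
    simpa using hinv t⁻¹ x (by simpa using hxt)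
  refine ⟨homogenization f, homogenization_zpow hfD, fun x => ?_, abs_homogenization_mul_sub_le hfD⟩
  rw [homogenization_eq_of_apply_pow fun n => ?_, hfφ]
  rw [← SubgroupClass.coe_pow, hfφ, hfφ, ← zpow_natCast, hhom, Int.cast_natCast]

/-- Extension theorem for discrete groups: if the short exact sequence
`1 → G → Ghat → Q → 1` virtually splits, then every `Ghat`-invariant homogeneous
quasimorphism on `G` extends to a homogeneous quasimorphism on `Ghat` with defect
at most twice the original defect bound. -/
theorem extension_of_invariant_quasimorphism_virtual_split
    {Ghat Q : Type*} [Group Ghat] [Group Q]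
    (q : Ghat →* Q) (hq : Function.Surjective q)
    (G : Subgroup Ghat) (hker : q.ker = G)
    (Q₀ : Subgroup Q) (hfin : Q₀.FiniteIndex)
    (s₀ : Q₀ →* Ghat) (hs₀ : ∀ x : Q₀, q (s₀ x) = x)
    (φ : G → ℝ) (D : ℝ)
    (hD : ∀ x y : G, |φ (x * y) - φ x - φ y| ≤ D)
    (hhom : ∀ (x : G) (m : ℤ), φ (x ^ m) = m * φ x)
    (hinv : ∀ (g : Ghat) (x : G) (h : g * (x : Ghat) * g⁻¹ ∈ G), φ ⟨g * x * g⁻¹, h⟩ = φ x) :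
    ∃ φhat : Ghat → ℝ,
      (∀ (g : Ghat) (m : ℤ), φhat (g ^ m) = m * φhat g) ∧
      (∀ x : G, φhat x = φ x) ∧
      (∀ x y : Ghat, |φhat (x * y) - φhat x - φhat y| ≤ 2 * D) :=
  extension_of_invariant_quasimorphism_virtual_split_general q G hker Q₀ hfin s₀ hs₀ φ D hD hhom
    hinv
end

section
/- Let Ĝ be a group, f, g_α, g_β ∈ Ĝ with g_α·g_β ∈ H for a subgroup H containing f, and let φ : H → ℝ be a homogeneous quasimorphism on H with f ∈ H and g_α g_β ∈ H. Set γ = [f, g_α]·[f, g_β⁻¹]⁻¹. If [f,g_α], [f,g_β⁻¹] and γ all lie in H, then |φ(γ)| ≤ 3·D(φ). -/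
/-!
A homogeneous quasimorphism is conjugation invariant: `φ (g x g⁻¹) - φ x` is bounded by `2 D`,
and it scales linearly under `x ↦ xⁿ`, so it vanishes. Writing `[f, g_α] = f c` and
`[f, g_β⁻¹] = f d`, the element `c = g_α f⁻¹ g_α⁻¹` is the conjugate of `d = g_β⁻¹ f⁻¹ g_β`
by `g_α g_β ∈ H`, so `φ c = φ d`; three applications of the defect bound then give `3 D`.
-/

lemma eq_zero_of_forall_nat_mul_abs_le {t C : ℝ} (h : ∀ n : ℕ, n * |t| ≤ C) : t = 0 := by
  by_contra ht
  obtain ⟨n, hn⟩ := exists_nat_gt (C / |t|)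
  have := (div_lt_iff₀ (abs_pos.mpr ht)).mp hn
  linarith [h n]

namespace Quasimorphism

variable {G : Type*} [Group G] {φ : G → ℝ} {D : ℝ}

lemma map_inv_of_map_zpow (hhom : ∀ (x : G) (m : ℤ), φ (x ^ m) = m * φ x) (x : G) :
    φ x⁻¹ = -φ x := by
  simpa using hhom x (-1)

lemma abs_map_conj_sub_le (hD : ∀ x y : G, |φ (x * y) - φ x - φ y| ≤ D)
    (hhom : ∀ (x : G) (m : ℤ), φ (x ^ m) = m * φ x) (g x : G) :
    |φ (g * x * g⁻¹) - φ x| ≤ 2 * D := by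
  have h₁ := abs_le.mp (hD (g * x) g⁻¹)
  have h₂ := abs_le.mp (hD g x)
  rw [map_inv_of_map_zpow hhom] at h₁
  rw [abs_le]
  constructor <;> linarith [h₁.1, h₁.2, h₂.1, h₂.2]

lemma map_conj (hD : ∀ x y : G, |φ (x * y) - φ x - φ y| ≤ D)
    (hhom : ∀ (x : G) (m : ℤ), φ (x ^ m) = m * φ x) (g x : G) :
    φ (g * x * g⁻¹) = φ x := by
  refine sub_eq_zero.mp (eq_zero_of_forall_nat_mul_abs_le (C := 2 * D) fun n => ?_)
  have h := abs_map_conj_sub_le hD hhom g (x ^ (n : ℤ))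
  rwa [← conj_zpow, hhom, hhom, Int.cast_natCast, ← mul_sub, abs_mul, Nat.abs_cast] at h

lemma abs_map_mul_inv_le_three_mul (hD : ∀ x y : G, |φ (x * y) - φ x - φ y| ≤ D)
    (hhom : ∀ (x : G) (m : ℤ), φ (x ^ m) = m * φ x) {a b f k : G}
    (hconj : f⁻¹ * a = k * (f⁻¹ * b) * k⁻¹) :
    |φ (a * b⁻¹)| ≤ 3 * D := by
  have hab := abs_le.mp (hD a b⁻¹)
  have ha := abs_le.mp (hD f (f⁻¹ * a))
  have hb := abs_le.mp (hD f (f⁻¹ * b))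
  have hcd : φ (f⁻¹ * a) = φ (f⁻¹ * b) := by rw [hconj, map_conj hD hhom]
  rw [map_inv_of_map_zpow hhom] at hab
  rw [mul_inv_cancel_left] at ha hb
  rw [abs_le]
  constructor <;> linarith [hab.1, hab.2, ha.1, ha.2, hb.1, hb.2]

end Quasimorphism

/-- Estimate for the value of a homogeneous quasimorphism on
`γ = [f, g_α]·[f, g_β⁻¹]⁻¹` when `f` and `g_α g_β` lie in the subgroup `H`. -/
theorem quasimorphism_commutator_estimate
    {Ghat : Type*} [Group Ghat] (H : Subgroup Ghat)
    (φ : H → ℝ) (D : ℝ)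
    (hD : ∀ x y : H, |φ (x * y) - φ x - φ y| ≤ D)
    (hhom : ∀ (x : H) (m : ℤ), φ (x ^ m) = m * φ x)
    (f gα gβ : Ghat) (hf : f ∈ H) (hαβ : gα * gβ ∈ H)
    (h₁ : f * gα * f⁻¹ * gα⁻¹ ∈ H)
    (h₂ : f * gβ⁻¹ * f⁻¹ * gβ ∈ H)
    (hγ : (f * gα * f⁻¹ * gα⁻¹) * (f * gβ⁻¹ * f⁻¹ * gβ)⁻¹ ∈ H) :
    |φ ⟨(f * gα * f⁻¹ * gα⁻¹) * (f * gβ⁻¹ * f⁻¹ * gβ)⁻¹, hγ⟩| ≤ 3 * D := by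
  refine Quasimorphism.abs_map_mul_inv_le_three_mul (a := ⟨_, h₁⟩) (b := ⟨_, h₂⟩)
    (f := ⟨f, hf⟩) (k := ⟨gα * gβ, hαβ⟩) hD hhom (Subtype.ext ?_)
  simp only [Subgroup.coe_mul, InvMemClass.coe_inv]
  group
end

section
/- Let G be a topological group and φ : G → ℝ a homogeneous quasimorphism. Then φ is continuous if and only if there exists an open neighborhood U of the identity of G such that φ restricted to U is bounded. -/
/-!
Comparing `x ^ n = g ^ n * ((g ^ n)⁻¹ * x ^ n)` through the quasimorphism inequality and
homogeneity gives `n * |φ x - φ g| ≤ D + |φ ((g ^ n)⁻¹ * x ^ n)|`. For fixed `n`, the map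
`x ↦ (g ^ n)⁻¹ * x ^ n` is continuous and sends `g` to `1`, so near `g` the last term is at
most the bound `C` of `φ` near `1`; hence `|φ x - φ g| ≤ (D + C) / n` near `g`, for every `n`.
-/

open Topology

section Quasimorphism

variable {G : Type*} [Group G] {φ : G → ℝ} {D : ℝ}

theorem natCast_mul_abs_sub_le (hD : ∀ x y : G, |φ (x * y) - φ x - φ y| ≤ D)
    (hpow : ∀ (g : G) (n : ℕ), φ (g ^ n) = n * φ g) (g x : G) (n : ℕ) :
    n * |φ x - φ g| ≤ D + |φ ((g ^ n)⁻¹ * x ^ n)| := by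
  have hsplit := hD (g ^ n) ((g ^ n)⁻¹ * x ^ n)
  rw [mul_inv_cancel_left, hpow, hpow] at hsplit
  rw [← abs_of_nonneg (Nat.cast_nonneg (α := ℝ) n), ← abs_mul, mul_sub]
  linarith [abs_sub_abs_le_abs_sub (n * φ x - n * φ g) (φ ((g ^ n)⁻¹ * x ^ n))]

theorem continuous_of_abs_le_on_nhds_one [TopologicalSpace G] [IsTopologicalGroup G]
    (hD : ∀ x y : G, |φ (x * y) - φ x - φ y| ≤ D)
    (hpow : ∀ (g : G) (n : ℕ), φ (g ^ n) = n * φ g)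
    {U : Set G} (hU : U ∈ 𝓝 1) {C : ℝ} (hC : ∀ x ∈ U, |φ x| ≤ C) : Continuous φ := by
  refine continuous_iff_continuousAt.2 fun g => Metric.tendsto_nhds.2 fun ε hε => ?_
  obtain ⟨n, hn⟩ := exists_nat_gt ((D + C) / ε)
  have hnε : D + C < n * ε := (div_lt_iff₀ hε).1 hn
  have hnear : ∀ᶠ x in 𝓝 g, (g ^ n)⁻¹ * x ^ n ∈ U :=
    (show Continuous fun x : G => (g ^ n)⁻¹ * x ^ n by fun_prop).continuousAt.preimage_mem_nhds
      (by simpa using hU)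
  filter_upwards [hnear] with x hx
  have hbound : n * |φ x - φ g| ≤ D + C :=
    (natCast_mul_abs_sub_le hD hpow g x n).trans (by linarith [hC _ hx])
  rw [Real.dist_eq]
  exact lt_of_mul_lt_mul_left (hbound.trans_lt hnε) n.cast_nonneg

end Quasimorphism

/-- A homogeneous quasimorphism on a topological group is continuous if and only if
it is bounded on some open neighborhood of the identity. -/
theorem homogeneous_quasimorphism_continuous_iff
    {G : Type*} [Group G] [TopologicalSpace G] [IsTopologicalGroup G]
    (φ : G → ℝ) (D : ℝ)
    (hD : ∀ x y : G, |φ (x * y) - φ x - φ y| ≤ D)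
    (hhom : ∀ (g : G) (m : ℤ), φ (g ^ m) = m * φ g) :
    Continuous φ ↔ ∃ U : Set G, IsOpen U ∧ (1 : G) ∈ U ∧ ∃ C : ℝ, ∀ x ∈ U, |φ x| ≤ C := by
  have hpow : ∀ (g : G) (n : ℕ), φ (g ^ n) = n * φ g := fun g n => by
    simpa using hhom g n
  have hφ1 : φ 1 = 0 := by simpa using hpow 1 0
  constructor
  · intro hφ
    refine ⟨φ ⁻¹' Set.Ioo (-1) 1, isOpen_Ioo.preimage hφ, by simp [hφ1], 1, fun x hx => ?_⟩
    exact abs_le.2 ⟨hx.1.le, hx.2.le⟩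
  · rintro ⟨U, hUo, hU1, C, hC⟩
    exact continuous_of_abs_le_on_nhds_one hD hpow (hUo.mem_nhds hU1) hC
end

section
/- Let G be a topological group and φ : G → ℝ a continuous quasimorphism. Then the homogenization φ_h of φ (defined by φ_h(x) = lim_{m→∞} φ(xᵐ)/m) is continuous. -/
/-!
Homogenization moves a quasimorphism by at most its defect, so `φh` is again a quasimorphism;
it is homogeneous, and it is bounded near `1` because `φ` is continuous there. For a homogeneous
quasimorphism `ψ` of defect `E` bounded by `C` near `1`, writing
`y ^ n = x ^ n * ((x ^ n)⁻¹ * y ^ n)` gives `n * |ψ y - ψ x| ≤ C + E` for all `y` near `x`,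
and `n` can be taken arbitrarily large.
-/

open Filter Topology

section

variable {G : Type*} [Group G]

def IsQuasimorphism (φ : G → ℝ) (D : ℝ) : Prop :=
  ∀ x y : G, |φ (x * y) - φ x - φ y| ≤ D

def IsHomogeneous (φ : G → ℝ) : Prop :=
  ∀ (x : G) (n : ℕ), φ (x ^ n) = n * φ x

namespace IsQuasimorphism

variable {φ ψ : G → ℝ} {D : ℝ}

theorem defect_nonneg (h : IsQuasimorphism φ D) : 0 ≤ D :=
  (abs_nonneg _).trans (h 1 1)

theorem abs_map_pow_succ_sub_le (h : IsQuasimorphism φ D) (x : G) (m : ℕ) :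
    |φ (x ^ (m + 1)) - (m + 1) * φ x| ≤ m * D := by
  induction m with
  | zero => simp
  | succ m ih =>
    have hstep := h (x ^ (m + 1)) x
    rw [← pow_succ] at hstep
    calc |φ (x ^ (m + 1 + 1)) - ((m + 1 : ℕ) + 1) * φ x|
        = |(φ (x ^ (m + 1 + 1)) - φ (x ^ (m + 1)) - φ x) + (φ (x ^ (m + 1)) - (m + 1) * φ x)| := by
          push_cast; ring_nf
      _ ≤ D + m * D := (abs_add_le _ _).trans (add_le_add hstep ih)
      _ = (m + 1 : ℕ) * D := by push_cast; ring

theorem abs_sub_le_of_tendsto (h : IsQuasimorphism φ D) {x : G} {a : ℝ}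
    (hlim : Tendsto (fun m : ℕ => φ (x ^ m) / m) atTop (𝓝 a)) : |a - φ x| ≤ D := by
  have hlim' : Tendsto (fun m : ℕ => |φ (x ^ (m + 1)) / (m + 1 : ℕ) - φ x|) atTop
      (𝓝 |a - φ x|) :=
    ((hlim.comp (tendsto_add_atTop_nat 1)).sub tendsto_const_nhds).abs
  refine le_of_tendsto' hlim' fun m => ?_
  have hm : (0 : ℝ) < m + 1 := by positivity
  rw [Nat.cast_succ, div_sub' hm.ne', abs_div, abs_of_pos hm, div_le_iff₀ hm]
  nlinarith [h.abs_map_pow_succ_sub_le x m, h.defect_nonneg]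

theorem of_abs_sub_le (h : IsQuasimorphism φ D) {D' : ℝ} (hclose : ∀ x, |ψ x - φ x| ≤ D') :
    IsQuasimorphism ψ (D + 3 * D') := fun x y => by
  have hφ := h x y
  have hxy := hclose (x * y)
  have hx := hclose x
  have hy := hclose y
  rw [abs_le] at *
  constructor <;> linarith

end IsQuasimorphism

theorem isHomogeneous_of_tendsto {φ φh : G → ℝ}
    (hlim : ∀ x : G, Tendsto (fun m : ℕ => φ (x ^ m) / m) atTop (𝓝 (φh x))) :
    IsHomogeneous φh := by
  intro x n
  rcases Nat.eq_zero_or_pos n with rfl | hn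
  · have hlim1 := hlim 1
    simp only [one_pow] at hlim1
    simpa using tendsto_nhds_unique hlim1 (tendsto_const_div_atTop_nhds_zero_nat (φ 1))
  have hsub : Tendsto (fun m : ℕ => n * (φ (x ^ (n * m)) / (n * m : ℕ))) atTop (𝓝 (n * φh x)) :=
    ((hlim x).comp (tendsto_id.const_mul_atTop' hn)).const_mul _
  have hpow : Tendsto (fun m : ℕ => φ (x ^ (n * m)) / m) atTop (𝓝 (φh (x ^ n))) := by
    simpa [← pow_mul] using hlim (x ^ n)
  refine tendsto_nhds_unique hpow (hsub.congr fun m => ?_)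
  push_cast
  rcases eq_or_ne (m : ℝ) 0 with hm | hm
  · simp [hm]
  · field_simp

namespace IsHomogeneous

variable [TopologicalSpace G] [IsTopologicalGroup G] {ψ : G → ℝ} {E C : ℝ}

theorem eventually_abs_sub_le (hh : IsHomogeneous ψ) (hq : IsQuasimorphism ψ E)
    (hC : ∀ᶠ z in 𝓝 1, |ψ z| ≤ C) (x : G) {n : ℕ} (hn : 0 < n) :
    ∀ᶠ y in 𝓝 x, |ψ y - ψ x| ≤ (C + E) / n := by
  have hto : Tendsto (fun y : G => (x ^ n)⁻¹ * y ^ n) (𝓝 x) (𝓝 1) := by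
    have hcont : Continuous fun y : G => (x ^ n)⁻¹ * y ^ n :=
      continuous_const.mul (continuous_pow n)
    simpa using hcont.tendsto x
  filter_upwards [hto.eventually hC] with y hy
  have hdefect := hq (x ^ n) ((x ^ n)⁻¹ * y ^ n)
  rw [mul_inv_cancel_left, hh, hh] at hdefect
  have hn' : (0 : ℝ) < n := by exact_mod_cast hn
  rw [le_div_iff₀ hn']
  calc |ψ y - ψ x| * n
      = |(n * ψ y - n * ψ x - ψ ((x ^ n)⁻¹ * y ^ n)) + ψ ((x ^ n)⁻¹ * y ^ n)| := by
        rw [sub_add_cancel, ← mul_sub, abs_mul, abs_of_pos hn', mul_comm]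
    _ ≤ E + C := (abs_add_le _ _).trans (add_le_add hdefect hy)
    _ = C + E := add_comm _ _

theorem continuous_of_eventually_abs_le (hh : IsHomogeneous ψ) (hq : IsQuasimorphism ψ E)
    (hC : ∀ᶠ z in 𝓝 1, |ψ z| ≤ C) : Continuous ψ := by
  refine continuous_iff_continuousAt.2 fun x => Metric.tendsto_nhds.2 fun ε hε => ?_
  obtain ⟨n, hn⟩ := exists_nat_gt ((C + E) / ε)
  have hsmall : (C + E) / (n + 1 : ℕ) < ε := by
    rw [div_lt_iff₀ (by positivity)]
    rw [div_lt_iff₀ hε] at hn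
    push_cast
    linarith
  filter_upwards [hh.eventually_abs_sub_le hq hC x n.succ_pos] with y hy
  exact (Real.dist_eq _ _).trans_lt (hy.trans_lt hsmall)

end IsHomogeneous

end

/-- The homogenization of a continuous quasimorphism on a topological group
is continuous. -/
theorem homogenization_continuous
    {G : Type*} [Group G] [TopologicalSpace G] [IsTopologicalGroup G]
    (φ : G → ℝ) (D : ℝ)
    (hD : ∀ x y : G, |φ (x * y) - φ x - φ y| ≤ D)
    (hcont : Continuous φ)
    (φh : G → ℝ)
    (hlim : ∀ x : G, Tendsto (fun m : ℕ => φ (x ^ m) / m) atTop (nhds (φh x))) :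
    Continuous φh := by
  have hquasi : IsQuasimorphism φ D := hD
  have hclose (x : G) : |φh x - φ x| ≤ D := hquasi.abs_sub_le_of_tendsto (hlim x)
  have hbounded : ∀ᶠ z in 𝓝 1, |φh z| ≤ D + (1 + |φ 1|) := by
    filter_upwards [hcont.continuousAt.eventually (Metric.ball_mem_nhds (φ 1) one_pos)]
      with z hz
    have hnear : |φ z - φ 1| < 1 := hz
    calc |φh z| = |(φh z - φ z) + ((φ z - φ 1) + φ 1)| := by ring_nf
      _ ≤ D + (1 + |φ 1|) :=
        (abs_add_le _ _).trans (add_le_add (hclose z) ((abs_add_le _ _).trans (by linarith)))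
  exact (isHomogeneous_of_tendsto hlim).continuous_of_eventually_abs_le
    (hquasi.of_abs_sub_le hclose) hbounded
end
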